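/- arXiv:math/0001058 — 2 statements merged into one kernel-verified Lean document; each statement's English description precedes it below -/
import Mathlib

section
/- For every constant k > 0, there are only finitely many conjugacy classes in SL₂(ℤ) of matrices A such that |tr A| > 2 and |tr A| ≤ k. That is, there is a finite set S of elements of SL₂(ℤ) such that every A ∈ SL₂(ℤ) with 2 < |tr A| ≤ k is conjugate in SL₂(ℤ) to an element of S. -/
open Matrix

private abbrev SL2' := Matrix.SpecialLinearGroup (Fin 2) ℤ

private def Tmat (m : ℤ) : SL2' := ⟨!![1, m; 0, 1], by simp [Matrix.det_fin_two_of]⟩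
private def Smat : SL2' := ⟨!![0, -1; 1, 0], by simp [Matrix.det_fin_two_of]⟩

private lemma det_rel (A : SL2') :
    (A : Matrix (Fin 2) (Fin 2) ℤ) 0 0 * (A : Matrix (Fin 2) (Fin 2) ℤ) 1 1 -
      (A : Matrix (Fin 2) (Fin 2) ℤ) 0 1 * (A : Matrix (Fin 2) (Fin 2) ℤ) 1 0 = 1 := by
  have := A.2
  rwa [Matrix.det_fin_two] at this

private lemma conjT (A : SL2') (m : ℤ) :
    ((Tmat m * A * (Tmat m)⁻¹ : SL2') : Matrix (Fin 2) (Fin 2) ℤ) =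
      !![A.1 0 0 + m * A.1 1 0, A.1 0 1 + m * (A.1 1 1 - A.1 0 0) - m ^ 2 * A.1 1 0;
         A.1 1 0, A.1 1 1 - m * A.1 1 0] := by
  rw [Matrix.SpecialLinearGroup.coe_mul, Matrix.SpecialLinearGroup.coe_mul]
  rw [Matrix.SpecialLinearGroup.coe_inv, Matrix.adjugate_fin_two]
  simp only [Matrix.SpecialLinearGroup.coe_mul, Tmat]
  ext i j
  fin_cases i <;> fin_cases j <;>
    simp [Matrix.mul_apply, Matrix.vecMul, dotProduct, Fin.sum_univ_two] <;> ring

private lemma conjS (A : SL2') :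
    ((Smat * A * Smat⁻¹ : SL2') : Matrix (Fin 2) (Fin 2) ℤ) =
      !![A.1 1 1, -A.1 1 0; -A.1 0 1, A.1 0 0] := by
  rw [Matrix.SpecialLinearGroup.coe_mul, Matrix.SpecialLinearGroup.coe_mul]
  rw [Matrix.SpecialLinearGroup.coe_inv, Matrix.adjugate_fin_two]
  simp only [Matrix.SpecialLinearGroup.coe_mul, Smat]
  ext i j
  fin_cases i <;> fin_cases j <;>
    simp [Matrix.mul_apply, Matrix.vecMul, dotProduct, Fin.sum_univ_two]

private lemma c_ne_zero (A : SL2')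
    (h : 2 < |(A : Matrix (Fin 2) (Fin 2) ℤ) 0 0 + (A : Matrix (Fin 2) (Fin 2) ℤ) 1 1|) :
    (A : Matrix (Fin 2) (Fin 2) ℤ) 1 0 ≠ 0 := by
  intro h0
  have hdet := det_rel A
  rw [h0, mul_zero, sub_zero] at hdet
  rcases Int.mul_eq_one_iff_eq_one_or_neg_one.mp hdet with ⟨h1, h2⟩ | ⟨h1, h2⟩ <;>
    rw [h1, h2] at h <;> norm_num at h

private lemma b_ne_zero (A : SL2')
    (h : 2 < |(A : Matrix (Fin 2) (Fin 2) ℤ) 0 0 + (A : Matrix (Fin 2) (Fin 2) ℤ) 1 1|) :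
    (A : Matrix (Fin 2) (Fin 2) ℤ) 0 1 ≠ 0 := by
  intro h0
  have hdet := det_rel A
  rw [h0, zero_mul, sub_zero] at hdet
  rcases Int.mul_eq_one_iff_eq_one_or_neg_one.mp hdet with ⟨h1, h2⟩ | ⟨h1, h2⟩ <;>
    rw [h1, h2] at h <;> norm_num at h

private lemma exists_shift_pos (r c : ℤ) (hc : 0 < c) :
    ∃ m : ℤ, -c ≤ r + 2 * m * c ∧ r + 2 * m * c < c := by
  refine ⟨-((r + c) / (2 * c)), ?_, ?_⟩ <;>
  · have hdiv := Int.mul_ediv_add_emod (r + c) (2 * c)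
    have h0 := Int.emod_nonneg (r + c) (by omega : (2 * c) ≠ 0)
    have h1 := Int.emod_lt_of_pos (r + c) (by omega : 0 < 2 * c)
    have key : r + 2 * (-((r + c) / (2 * c))) * c = (r + c) % (2 * c) - c := by
      linear_combination -hdiv
    rw [key]
    omega

private lemma exists_shift (r c : ℤ) (hc : c ≠ 0) : ∃ m : ℤ, |r + 2 * m * c| ≤ |c| := by
  rcases hc.lt_or_gt with h | h
  · obtain ⟨m, h1, h2⟩ := exists_shift_pos r (-c) (by omega)
    refine ⟨-m, ?_⟩
    have he : r + 2 * (-m) * c = r + 2 * m * (-c) := by ring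
    rw [he, abs_of_neg h]
    rw [abs_le]
    constructor <;> linarith
  · obtain ⟨m, h1, h2⟩ := exists_shift_pos r c h
    refine ⟨m, ?_⟩
    rw [abs_of_pos h, abs_le]
    constructor <;> linarith

/-- Reduction: every hyperbolic element of `SL₂(ℤ)` is conjugate to one with
`|a - d| ≤ |c| ≤ |b|`. Induction on `|c|`. -/
private lemma reduce : ∀ n : ℕ, ∀ A : SL2',
    2 < |(A : Matrix (Fin 2) (Fin 2) ℤ) 0 0 + (A : Matrix (Fin 2) (Fin 2) ℤ) 1 1| →
    ((A : Matrix (Fin 2) (Fin 2) ℤ) 1 0).natAbs ≤ n →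
    ∃ A' : SL2', IsConj A' A ∧
      (A' : Matrix (Fin 2) (Fin 2) ℤ) 0 0 + (A' : Matrix (Fin 2) (Fin 2) ℤ) 1 1 =
        (A : Matrix (Fin 2) (Fin 2) ℤ) 0 0 + (A : Matrix (Fin 2) (Fin 2) ℤ) 1 1 ∧
      |(A' : Matrix (Fin 2) (Fin 2) ℤ) 0 0 - (A' : Matrix (Fin 2) (Fin 2) ℤ) 1 1| ≤
        |(A' : Matrix (Fin 2) (Fin 2) ℤ) 1 0| ∧
      |(A' : Matrix (Fin 2) (Fin 2) ℤ) 1 0| ≤ |(A' : Matrix (Fin 2) (Fin 2) ℤ) 0 1| := by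
  intro n
  induction n with
  | zero =>
    intro A htr h0
    exact absurd (Int.natAbs_eq_zero.mp (Nat.le_zero.mp h0)) (c_ne_zero A htr)
  | succ n ih =>
    intro A htr hn
    have hc : (A : Matrix (Fin 2) (Fin 2) ℤ) 1 0 ≠ 0 := c_ne_zero A htr
    obtain ⟨m, hm⟩ := exists_shift
      ((A : Matrix (Fin 2) (Fin 2) ℤ) 0 0 - (A : Matrix (Fin 2) (Fin 2) ℤ) 1 1)
      ((A : Matrix (Fin 2) (Fin 2) ℤ) 1 0) hc
    set A₁ : SL2' := Tmat m * A * (Tmat m)⁻¹ with hA₁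
    have hA1coe := conjT A m
    rw [← hA₁] at hA1coe
    have e00 : (A₁ : Matrix (Fin 2) (Fin 2) ℤ) 0 0 = A.1 0 0 + m * A.1 1 0 := by
      rw [hA1coe]; simp
    have e10 : (A₁ : Matrix (Fin 2) (Fin 2) ℤ) 1 0 = A.1 1 0 := by
      rw [hA1coe]; simp
    have e11 : (A₁ : Matrix (Fin 2) (Fin 2) ℤ) 1 1 = A.1 1 1 - m * A.1 1 0 := by
      rw [hA1coe]; simp
    have hconj1 : IsConj A₁ A := (isConj_iff.mpr ⟨Tmat m, hA₁.symm⟩).symm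
    have htr1 : (A₁ : Matrix (Fin 2) (Fin 2) ℤ) 0 0 + (A₁ : Matrix (Fin 2) (Fin 2) ℤ) 1 1 =
        (A : Matrix (Fin 2) (Fin 2) ℤ) 0 0 + (A : Matrix (Fin 2) (Fin 2) ℤ) 1 1 := by
      rw [e00, e11]; ring
    have had1 : |(A₁ : Matrix (Fin 2) (Fin 2) ℤ) 0 0 - (A₁ : Matrix (Fin 2) (Fin 2) ℤ) 1 1| ≤
        |(A₁ : Matrix (Fin 2) (Fin 2) ℤ) 1 0| := by
      rw [e00, e10, e11]
      have he : A.1 0 0 + m * A.1 1 0 - (A.1 1 1 - m * A.1 1 0) =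
          (A.1 0 0 - A.1 1 1) + 2 * m * A.1 1 0 := by ring
      rw [he]
      exact hm
    by_cases hcb : |(A₁ : Matrix (Fin 2) (Fin 2) ℤ) 1 0| ≤ |(A₁ : Matrix (Fin 2) (Fin 2) ℤ) 0 1|
    · exact ⟨A₁, hconj1, htr1, had1, hcb⟩
    · push_neg at hcb
      set A₂ : SL2' := Smat * A₁ * Smat⁻¹ with hA₂
      have hA2coe := conjS A₁
      rw [← hA₂] at hA2coe
      have f10 : (A₂ : Matrix (Fin 2) (Fin 2) ℤ) 1 0 = -(A₁ : Matrix (Fin 2) (Fin 2) ℤ) 0 1 := by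
        rw [hA2coe]; simp
      have ftr : (A₂ : Matrix (Fin 2) (Fin 2) ℤ) 0 0 + (A₂ : Matrix (Fin 2) (Fin 2) ℤ) 1 1 =
          (A : Matrix (Fin 2) (Fin 2) ℤ) 0 0 + (A : Matrix (Fin 2) (Fin 2) ℤ) 1 1 := by
        rw [← htr1]
        have g0 : (A₂ : Matrix (Fin 2) (Fin 2) ℤ) 0 0 = (A₁ : Matrix (Fin 2) (Fin 2) ℤ) 1 1 := by
          rw [hA2coe]; simp
        have g1 : (A₂ : Matrix (Fin 2) (Fin 2) ℤ) 1 1 = (A₁ : Matrix (Fin 2) (Fin 2) ℤ) 0 0 := by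
          rw [hA2coe]; simp
        rw [g0, g1]; ring
      have hsz : ((A₂ : Matrix (Fin 2) (Fin 2) ℤ) 1 0).natAbs ≤ n := by
        have h1 : |(A₂ : Matrix (Fin 2) (Fin 2) ℤ) 1 0| < |(A : Matrix (Fin 2) (Fin 2) ℤ) 1 0| := by
          rw [f10, abs_neg, ← e10]
          exact hcb
        rw [Int.abs_eq_natAbs, Int.abs_eq_natAbs] at h1
        have h2 : ((A₂ : Matrix (Fin 2) (Fin 2) ℤ) 1 0).natAbs <
            ((A : Matrix (Fin 2) (Fin 2) ℤ) 1 0).natAbs := by exact_mod_cast h1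
        omega
      obtain ⟨A', hconj', htr', h1', h2'⟩ := ih A₂ (by rw [ftr]; exact htr) hsz
      have hconj2 : IsConj A₂ A₁ := (isConj_iff.mpr ⟨Smat, hA₂.symm⟩).symm
      exact ⟨A', hconj'.trans (hconj2.trans hconj1), by rw [htr', ftr], h1', h2'⟩

private lemma finite_bounded (N : ℤ) :
    {A : SL2' | ∀ i j, |(A : Matrix (Fin 2) (Fin 2) ℤ) i j| ≤ N}.Finite := by
  have hf : (Set.pi Set.univ fun _ : Fin 2 =>
      Set.pi Set.univ fun _ : Fin 2 => Set.Icc (-N) N).Finite :=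
    Set.Finite.pi fun _ => Set.Finite.pi fun _ => Set.finite_Icc _ _
  refine Set.Finite.of_finite_image
    (f := fun A : SL2' => fun i j => (A : Matrix (Fin 2) (Fin 2) ℤ) i j) (hf.subset ?_) ?_
  · rintro _ ⟨A, hA, rfl⟩
    rw [Set.mem_pi]
    intro i _
    rw [Set.mem_pi]
    intro j _
    exact Set.mem_Icc.mpr (abs_le.mp (hA i j))
  · intro A _ B _ h
    apply Subtype.ext
    exact Matrix.ext fun i j => congrFun (congrFun h i) j

set_option maxHeartbeats 1000000 in
/-- For every constant `k > 0`, there are only finitely many conjugacy classes in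
`SL₂(ℤ)` of matrices `A` with `2 < |tr A| ≤ k`: there is a finite set `S` such that
every such `A` is conjugate in `SL₂(ℤ)` to an element of `S`. -/
theorem finitely_many_conjugacy_classes_of_bounded_trace (k : ℝ) (hk : 0 < k) :
    ∃ S : Finset (Matrix.SpecialLinearGroup (Fin 2) ℤ),
      ∀ A : Matrix.SpecialLinearGroup (Fin 2) ℤ,
        2 < |((Matrix.trace (A : Matrix (Fin 2) (Fin 2) ℤ) : ℤ) : ℝ)| →
        |((Matrix.trace (A : Matrix (Fin 2) (Fin 2) ℤ) : ℤ) : ℝ)| ≤ k →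
        ∃ B ∈ S, IsConj B A := by
  set N : ℤ := ⌈k⌉ + ⌈k ^ 2⌉ with hN
  refine ⟨(finite_bounded N).toFinset, ?_⟩
  intro A htr hle
  rw [Matrix.trace_fin_two] at htr hle
  have ht2 : 2 < |(A : Matrix (Fin 2) (Fin 2) ℤ) 0 0 + (A : Matrix (Fin 2) (Fin 2) ℤ) 1 1| := by
    exact_mod_cast htr
  obtain ⟨A', hconj, htr', had, hcb⟩ :=
    reduce ((A : Matrix (Fin 2) (Fin 2) ℤ) 1 0).natAbs A ht2 le_rfl
  refine ⟨A', ?_, hconj⟩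
  rw [Set.Finite.mem_toFinset]
  -- notation for the entries of A'
  set a := (A' : Matrix (Fin 2) (Fin 2) ℤ) 0 0 with ha
  set b := (A' : Matrix (Fin 2) (Fin 2) ℤ) 0 1 with hb
  set c := (A' : Matrix (Fin 2) (Fin 2) ℤ) 1 0 with hc
  set d := (A' : Matrix (Fin 2) (Fin 2) ℤ) 1 1 with hd
  have hdet : a * d - b * c = 1 := det_rel A'
  have ht2' : 2 < |a + d| := by rw [htr']; exact ht2
  have hcne : c ≠ 0 := c_ne_zero A' ht2'
  have hbne : b ≠ 0 := b_ne_zero A' ht2'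
  have disc : (a - d) ^ 2 + 4 * (b * c) = (a + d) ^ 2 - 4 := by linear_combination (-4) * hdet
  have ht3 : 3 ≤ |a + d| := ht2'
  have ht9 : 9 ≤ (a + d) ^ 2 := by
    have h9 := pow_le_pow_left₀ (by norm_num : (0 : ℤ) ≤ 3) ht3 2
    rw [sq_abs] at h9
    linarith [h9]
  have h1' : (a - d) * (a - d) ≤ c * c := by
    have := mul_self_le_mul_self (abs_nonneg (a - d)) had
    rwa [abs_mul_abs_self, abs_mul_abs_self] at this
  have h2' : c * c ≤ |b * c| := by
    have := mul_le_mul_of_nonneg_right hcb (abs_nonneg c)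
    rwa [abs_mul_abs_self, ← abs_mul] at this
  have hbcpos : 0 < b * c := by
    by_contra hcon
    push_neg at hcon
    have habs : |b * c| = -(b * c) := abs_of_nonpos hcon
    linarith [h1', h2', disc, ht9, habs, pow_two (a - d), hcon]
  have habs : |b * c| = b * c := abs_of_pos hbcpos
  have hcc : 4 * (c * c) ≤ (a + d) ^ 2 - 4 := by
    linarith [h2', habs, disc, sq_nonneg (a - d)]
  have hbb : 4 * |b| ≤ (a + d) ^ 2 - 4 := by
    have h1c : 1 ≤ |c| := Int.one_le_abs hcne
    have : |b| * 1 ≤ |b| * |c| := mul_le_mul_of_nonneg_left h1c (abs_nonneg b)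
    rw [mul_one, ← abs_mul, habs] at this
    linarith [this, disc, sq_nonneg (a - d)]
  -- cast the trace bounds
  have hNk2 : (a + d) ^ 2 ≤ ⌈k ^ 2⌉ := by
    have h1 : ((a + d) ^ 2 : ℝ) ≤ k ^ 2 := by
      have h2 : |((a + d : ℤ) : ℝ)| ≤ k := by
        rw [htr']; exact hle
      calc ((a + d) ^ 2 : ℝ) = |((a + d : ℤ) : ℝ)| ^ 2 := by rw [sq_abs]; norm_num
        _ ≤ k ^ 2 := pow_le_pow_left₀ (abs_nonneg _) h2 2
    have h3 : ((a + d) ^ 2 : ℝ) ≤ (⌈k ^ 2⌉ : ℝ) := h1.trans (Int.le_ceil _)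
    exact_mod_cast h3
  have hNk1 : |a + d| ≤ ⌈k⌉ := by
    have h2 : |((a + d : ℤ) : ℝ)| ≤ (⌈k⌉ : ℝ) := by
      rw [htr']
      exact hle.trans (Int.le_ceil _)
    rw [← Int.cast_abs] at h2
    exact_mod_cast h2
  have hk1nn : (0 : ℤ) ≤ ⌈k⌉ := le_trans (abs_nonneg _) hNk1
  have hk2nn : (0 : ℤ) ≤ ⌈k ^ 2⌉ := le_trans (sq_nonneg (a + d)) hNk2
  -- entrywise bounds
  have hcbound : |c| ≤ N := by
    have h1c : 1 ≤ |c| := Int.one_le_abs hcne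
    have : |c| * 1 ≤ |c| * |c| := mul_le_mul_of_nonneg_left h1c (abs_nonneg c)
    rw [mul_one, abs_mul_abs_self] at this
    rw [hN]
    linarith [this, hcc, hNk2, hk1nn]
  have hbbound : |b| ≤ N := by
    rw [hN]
    linarith [hbb, hNk2, hk1nn]
  have hadb : |a - d| ≤ ⌈k ^ 2⌉ := by
    have h1 : |a - d| ≤ |c| := had
    have h1c : 1 ≤ |c| := Int.one_le_abs hcne
    have h2 : |c| * 1 ≤ |c| * |c| := mul_le_mul_of_nonneg_left h1c (abs_nonneg c)
    rw [mul_one, abs_mul_abs_self] at h2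
    linarith [h1, h2, hcc, hNk2]
  have habound : |a| ≤ N := by
    have h1 : |2 * a| ≤ |a + d| + |a - d| := by
      have : 2 * a = (a + d) + (a - d) := by ring
      rw [this]
      exact abs_add_le _ _
    rw [abs_mul] at h1
    have h2 : |(2 : ℤ)| = 2 := by norm_num
    rw [h2] at h1
    rw [hN]
    omega
  have hdbound : |d| ≤ N := by
    have h1 : |2 * d| ≤ |a + d| + |a - d| := by
      have : 2 * d = (a + d) - (a - d) := by ring
      rw [this]
      exact abs_sub _ _
    rw [abs_mul] at h1
    have h2 : |(2 : ℤ)| = 2 := by norm_num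
    rw [h2] at h1
    rw [hN]
    omega
  intro i j
  fin_cases i <;> fin_cases j
  · exact habound
  · exact hbbound
  · exact hcbound
  · exact hdbound
end

section
/- Let A = [[a, b], [c, d]] be an element of SL₂(ℤ) with b·c ≠ 0, and let k > 0 be such that |a + d| ≤ k and |a| > k. Then there exists C ∈ SL₂(ℤ) such that the (1,1)-entry of C A C⁻¹ has absolute value strictly less than |a|. -/
private lemma key_pos' (a m : ℤ) (hm : 0 < m) (h : m < 2*|a|) : ∃ n : ℤ, |a + n*m| < |a| := by
  have h0 : 0 ≤ a % m := Int.emod_nonneg a (by omega)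
  have h1 : a % m < m := Int.emod_lt_of_pos a hm
  have hd : m * (a / m) + a % m = a := Int.mul_ediv_add_emod a m
  rcases le_or_gt (2*(a % m)) m with hc | hc
  · refine ⟨-(a / m), ?_⟩
    have he : a + -(a / m) * m = a % m := by linear_combination -hd
    rw [he]
    simp only [Int.abs_eq_natAbs] at h ⊢
    omega
  · refine ⟨-(a / m) - 1, ?_⟩
    have he : a + (-(a / m) - 1) * m = a % m - m := by linear_combination -hd
    rw [he]
    simp only [Int.abs_eq_natAbs] at h ⊢
    omega

private lemma key_red' (a m : ℤ) (hm : m ≠ 0) (h : |m| < 2*|a|) : ∃ n : ℤ, |a + n*m| < |a| := by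
  rcases hm.lt_or_gt with hneg | hpos
  · obtain ⟨n, hn⟩ := key_pos' a (-m) (by omega) (by rwa [abs_of_neg hneg] at h)
    exact ⟨-n, by rw [show -n * m = n * -m by ring]; exact hn⟩
  · exact key_pos' a m hpos (by rwa [abs_of_pos hpos] at h)

private def UnAux (n : ℤ) : Matrix.SpecialLinearGroup (Fin 2) ℤ :=
  ⟨!![1, n; 0, 1], by simp [Matrix.det_fin_two_of]⟩

private def WnAux (n : ℤ) : Matrix.SpecialLinearGroup (Fin 2) ℤ :=
  ⟨!![1, 0; n, 1], by simp [Matrix.det_fin_two_of]⟩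

private lemma UnAux_conj (A : Matrix.SpecialLinearGroup (Fin 2) ℤ) (n : ℤ) :
    ((UnAux n * A * (UnAux n)⁻¹ : Matrix.SpecialLinearGroup (Fin 2) ℤ) :
        Matrix (Fin 2) (Fin 2) ℤ) 0 0
      = (A : Matrix (Fin 2) (Fin 2) ℤ) 0 0 + n * (A : Matrix (Fin 2) (Fin 2) ℤ) 1 0 := by
  have hA : (A : Matrix (Fin 2) (Fin 2) ℤ) = !![A 0 0, A 0 1; A 1 0, A 1 1] :=
    Matrix.eta_fin_two _
  rw [Matrix.SpecialLinearGroup.coe_mul, Matrix.SpecialLinearGroup.coe_mul,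
    Matrix.SpecialLinearGroup.coe_inv,
    show ((UnAux n : Matrix.SpecialLinearGroup (Fin 2) ℤ) : Matrix (Fin 2) (Fin 2) ℤ)
      = !![1, n; 0, 1] from rfl, hA,
    Matrix.adjugate_fin_two_of, Matrix.mul_fin_two, Matrix.mul_fin_two]
  simp
  try ring

private lemma WnAux_conj (A : Matrix.SpecialLinearGroup (Fin 2) ℤ) (n : ℤ) :
    ((WnAux n * A * (WnAux n)⁻¹ : Matrix.SpecialLinearGroup (Fin 2) ℤ) :
        Matrix (Fin 2) (Fin 2) ℤ) 0 0
      = (A : Matrix (Fin 2) (Fin 2) ℤ) 0 0 + (-n) * (A : Matrix (Fin 2) (Fin 2) ℤ) 0 1 := by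
  have hA : (A : Matrix (Fin 2) (Fin 2) ℤ) = !![A 0 0, A 0 1; A 1 0, A 1 1] :=
    Matrix.eta_fin_two _
  rw [Matrix.SpecialLinearGroup.coe_mul, Matrix.SpecialLinearGroup.coe_mul,
    Matrix.SpecialLinearGroup.coe_inv,
    show ((WnAux n : Matrix.SpecialLinearGroup (Fin 2) ℤ) : Matrix (Fin 2) (Fin 2) ℤ)
      = !![1, 0; n, 1] from rfl, hA,
    Matrix.adjugate_fin_two_of, Matrix.mul_fin_two, Matrix.mul_fin_two]
  simp
  try ring

/-- If `A = [[a,b],[c,d]] ∈ SL₂(ℤ)` has `b·c ≠ 0`, `|a + d| ≤ k` and `|a| > k` for some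
`k > 0`, then `A` can be conjugated in `SL₂(ℤ)` so that the `(1,1)`-entry strictly
drops in absolute value. -/
theorem exists_conj_smaller_top_left_entry
    (A : Matrix.SpecialLinearGroup (Fin 2) ℤ) (k : ℝ) (hk : 0 < k)
    (hbc : (A : Matrix (Fin 2) (Fin 2) ℤ) 0 1 * (A : Matrix (Fin 2) (Fin 2) ℤ) 1 0 ≠ 0)
    (htr : |(((A : Matrix (Fin 2) (Fin 2) ℤ) 0 0 + (A : Matrix (Fin 2) (Fin 2) ℤ) 1 1 : ℤ) : ℝ)| ≤ k)
    (ha : k < |(((A : Matrix (Fin 2) (Fin 2) ℤ) 0 0 : ℤ) : ℝ)|) :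
    ∃ C : Matrix.SpecialLinearGroup (Fin 2) ℤ,
      |((C * A * C⁻¹ : Matrix.SpecialLinearGroup (Fin 2) ℤ) : Matrix (Fin 2) (Fin 2) ℤ) 0 0| <
        |(A : Matrix (Fin 2) (Fin 2) ℤ) 0 0| := by
  set a := (A : Matrix (Fin 2) (Fin 2) ℤ) 0 0 with ha'
  set b := (A : Matrix (Fin 2) (Fin 2) ℤ) 0 1 with hb'
  set c := (A : Matrix (Fin 2) (Fin 2) ℤ) 1 0 with hc'
  set d := (A : Matrix (Fin 2) (Fin 2) ℤ) 1 1 with hd'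
  have hb : b ≠ 0 := fun h => hbc (by rw [h, zero_mul])
  have hc : c ≠ 0 := fun h => hbc (by rw [h, mul_zero])
  -- integer inequalities from the real ones
  have htr' : |a + d| < |a| := by
    exact_mod_cast lt_of_le_of_lt htr ha
  have ha1 : 1 ≤ |a| := by
    have h0 : (0:ℤ) < |a| := by exact_mod_cast lt_trans hk ha
    omega
  -- determinant
  have hdet : a * d - b * c = 1 := by
    have h2 := A.2
    rw [Matrix.det_fin_two] at h2
    linear_combination h2
  -- |d| ≤ 2|a| - 1
  have hd2 : |d| ≤ 2 * |a| - 1 := by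
    simp only [Int.abs_eq_natAbs] at htr' ha1 ⊢
    omega
  -- min (|b|) (|c|) < 2|a|
  have hmin : min |b| |c| < 2 * |a| := by
    by_contra hcon
    push_neg at hcon
    have hbB : 2 * |a| ≤ |b| := le_trans hcon (min_le_left _ _)
    have hcB : 2 * |a| ≤ |c| := le_trans hcon (min_le_right _ _)
    have h1 : |b| * |c| = |a * d - 1| := by
      rw [← abs_mul]
      congr 1
      linear_combination -hdet
    have h2 : |a * d - 1| ≤ |a| * |d| + 1 := by
      calc |a * d - 1| ≤ |a * d| + 1 := by
            have := abs_sub_abs_le_abs_sub (a * d) 1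
            have := abs_sub (a*d) 1
            calc |a * d - 1| ≤ |a*d| + |(1:ℤ)| := abs_sub _ _
              _ = |a*d| + 1 := by norm_num
        _ = |a| * |d| + 1 := by rw [abs_mul]
    nlinarith [abs_nonneg a, abs_nonneg d]
  rcases le_or_gt |c| |b| with hle | hlt
  · -- use c
    rw [min_eq_right hle] at hmin
    obtain ⟨n, hn⟩ := key_red' a c hc hmin
    exact ⟨UnAux n, by rw [UnAux_conj]; exact hn⟩
  · rw [min_eq_left hlt.le] at hmin
    obtain ⟨n, hn⟩ := key_red' a b hb hmin
    exact ⟨WnAux (-n), by rw [WnAux_conj]; simpa using hn⟩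
end
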